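/- Let A ∈ ℝ^{m×n} with singular values σ₁ ≥ ⋯ ≥ σ_r > 0 and suppose σ_k > σ_{k+1} (with σ_{k+1} := 0 if k ≥ r). If γ < σ_k, then the minimum value of ‖A − XY‖_F² + γ‖X‖_F² + γ‖Y‖_F² over X ∈ ℝ^{m×k}, Y ∈ ℝ^{k×n} equals ∑_{i>k} σᵢ² + ∑_{i=1}^{k} (γ² + 2γ(σᵢ − γ)) = ∑_{i>k} σᵢ² + ∑_{i=1}^{k} (2γσᵢ − γ²). -/

import Mathlib

/-!
Replacing `(X, Y)` by `(X W, Wᵀ Y)` for an orthogonal `W` changes neither `X Y` nor the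
regularisers, so by the spectral theorem for `Xᵀ X` the columns `z_j` of `X` may be taken
orthogonal, with `‖z_j‖² = d_j`. The loss then splits as
`‖A‖² + ∑_j ((d_j + γ) ‖y_j‖² - 2 ⟪Aᵀ z_j, y_j⟫ + γ d_j)` over the rows `y_j` of `Y`.
Minimising each quadratic in `y_j`, and using `‖Aᵀ z_j‖² = ∑_i σ_i² ⟪u_i, z_j⟫²`, bounds the
`j`-th term below by `-∑_i t_ij (σ_i - γ)₊²` with `t_ij = ⟪u_i, z_j⟫² / d_j`. Bessel's inequality
for the two orthogonal families `u` and `z` makes `t` doubly substochastic with `k` columns, so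
`∑_ij t_ij (σ_i - γ)₊²` is at most the sum of the `k` largest `(σ_i - γ)²`. The truncated SVD
`X = U_k (Σ_k - γ)^{1/2}`, `Y = (Σ_k - γ)^{1/2} V_kᵀ` attains this bound.
-/

open Matrix BigOperators

/-- Frobenius norm squared of a real matrix. -/
noncomputable def frobSq {m n : ℕ} (X : Matrix (Fin m) (Fin n) ℝ) : ℝ :=
  ∑ i, ∑ j, (X i j) ^ 2

theorem sum_smul_dotProduct_sum_smul {ι N : Type*} [Fintype ι] [Fintype N] [DecidableEq ι]
    {e : ι → N → ℝ} {d : ι → ℝ} (he : ∀ i j, e i ⬝ᵥ e j = if i = j then d i else 0)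
    (a b : ι → ℝ) : (∑ i, a i • e i) ⬝ᵥ (∑ i, b i • e i) = ∑ i, a i * b i * d i := by
  simp [sum_dotProduct, dotProduct_sum, smul_dotProduct, dotProduct_smul, he, mul_left_comm,
    mul_assoc]

-- Bessel's inequality; as `x / 0 = 0`, the terms with `d i = 0` drop out.
theorem sum_sq_dotProduct_div_le {ι N : Type*} [Fintype ι] [Fintype N] [DecidableEq ι]
    {e : ι → N → ℝ} {d : ι → ℝ} (he : ∀ i j, e i ⬝ᵥ e j = if i = j then d i else 0)
    (x : N → ℝ) : ∑ i, (x ⬝ᵥ e i) ^ 2 / d i ≤ x ⬝ᵥ x := by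
  set a : ι → ℝ := fun i => (x ⬝ᵥ e i) / d i
  have hsq : ∀ i, a i * a i * d i = (x ⬝ᵥ e i) ^ 2 / d i := fun i => by
    rcases eq_or_ne (d i) 0 with h | h
    · simp [a, h]
    · simp only [a]
      field_simp
  have hcross : x ⬝ᵥ ∑ i, a i • e i = ∑ i, (x ⬝ᵥ e i) ^ 2 / d i := by
    simp only [dotProduct_sum, dotProduct_smul, smul_eq_mul, a]
    exact Finset.sum_congr rfl fun i _ => by ring
  have := dotProduct_self_star_nonneg (x - ∑ i, a i • e i)
  simp only [star_trivial, sub_dotProduct, dotProduct_sub, dotProduct_comm _ x, hcross,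
    sum_smul_dotProduct_sum_smul he, hsq] at this
  linarith

theorem neg_dotProduct_self_div_le {N : Type*} [Fintype N] {c : ℝ} (hc : 0 ≤ c) {b : N → ℝ}
    (hb : c = 0 → b = 0) (y : N → ℝ) : -(b ⬝ᵥ b / c) ≤ c * (y ⬝ᵥ y) - 2 * (b ⬝ᵥ y) := by
  obtain rfl | hc := hc.eq_or_lt
  · simp [hb rfl]
  have hsq : 0 ≤ c * ((y - c⁻¹ • b) ⬝ᵥ (y - c⁻¹ • b)) :=
    mul_nonneg hc.le (by simpa using dotProduct_self_star_nonneg (y - c⁻¹ • b))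
  have hexpand : c * ((y - c⁻¹ • b) ⬝ᵥ (y - c⁻¹ • b))
      = c * (y ⬝ᵥ y) - 2 * (b ⬝ᵥ y) + b ⬝ᵥ b / c := by
    simp only [sub_dotProduct, dotProduct_sub, smul_dotProduct, dotProduct_smul, smul_eq_mul,
      dotProduct_comm y b]
    field_simp
    ring
  linarith

theorem sq_mul_div_add_le {σ γ d β : ℝ} (hσ : 0 ≤ σ) (hγ : 0 ≤ γ) (hβ : 0 ≤ β) (hβd : β ≤ d) :
    σ ^ 2 * β / (d + γ) ≤ β / d * max (σ - γ) 0 ^ 2 + γ * β := by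
  obtain rfl | hd := (hβ.trans hβd).eq_or_lt
  · simp [le_antisymm hβd hβ]
  have key : d * σ ^ 2 ≤ (d + γ) * (max (σ - γ) 0 ^ 2 + γ * d) := by
    rcases le_total σ γ with h | h
    · rw [max_eq_right (by linarith)]
      have hσγ : σ ^ 2 ≤ γ ^ 2 := pow_le_pow_left₀ hσ h 2
      nlinarith [mul_le_mul_of_nonneg_left hσγ hd.le, mul_nonneg (mul_nonneg hd.le hd.le) hγ]
    · -- the two sides differ by `γ * (σ - d - γ) ^ 2`
      rw [max_eq_left (by linarith)]
      nlinarith [mul_nonneg hγ (sq_nonneg (σ - d - γ))]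
  calc σ ^ 2 * β / (d + γ) = β / d * (d * σ ^ 2 / (d + γ)) := by field_simp
    _ ≤ β / d * (max (σ - γ) 0 ^ 2 + γ * d) := by
      gcongr
      rwa [div_le_iff₀ (by positivity), mul_comm _ (d + γ)]
    _ = β / d * max (σ - γ) 0 ^ 2 + γ * β := by field_simp

theorem sum_mul_le_sum_of_antitone {r k : ℕ} {h c : Fin r → ℝ} (hh : Antitone h)
    (hh0 : ∀ i, 0 ≤ h i) (hc0 : ∀ i, 0 ≤ c i) (hc1 : ∀ i, c i ≤ 1) (hck : ∑ i, c i ≤ k) :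
    ∑ i, c i * h i ≤ ∑ i : Fin r, if (i : ℕ) < k then h i else 0 := by
  -- `θ` is the `(k + 1)`-st largest value of `h`, or `0` if `r ≤ k`
  set θ : ℝ := if hk : k < r then h ⟨k, hk⟩ else 0
  have hterm : ∀ i, c i * h i - (if (i : ℕ) < k then h i else 0)
      ≤ θ * (c i - if (i : ℕ) < k then 1 else 0) := by
    intro i
    split_ifs with hi
    · have : θ ≤ h i := by
        unfold θ; split_ifs with hk
        · exact hh (Fin.le_def.mpr hi.le)
        · exact hh0 i
      nlinarith [hc1 i]
    · have hk : k < r := by omega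
      have : h i ≤ θ := by
        simp only [θ, dif_pos hk]
        exact hh (Fin.le_def.mpr (not_lt.mp hi))
      nlinarith [hc0 i]
  have hcount : ∑ i : Fin r, (if (i : ℕ) < k then (1 : ℝ) else 0) = min r k := by
    rw [Finset.sum_boole, Fin.card_filter_val_lt, Nat.cast_min]
  have hslack : θ * (∑ i, c i - min r k) ≤ 0 := by
    unfold θ; split_ifs with hk
    · rw [min_eq_right (by exact_mod_cast hk.le)]
      exact mul_nonpos_of_nonneg_of_nonpos (hh0 _) (by linarith)
    · simp
  have := Finset.sum_le_sum fun i (_ : i ∈ Finset.univ) => hterm i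
  rw [Finset.sum_sub_distrib, ← Finset.mul_sum, Finset.sum_sub_distrib, hcount] at this
  linarith

theorem sum_ite_lt_eq_sum_castLE {r k : ℕ} (hkr : k ≤ r) (f : Fin r → ℝ) :
    (∑ i : Fin r, if (i : ℕ) < k then f i else 0) = ∑ j : Fin k, f (Fin.castLE hkr j) := by
  have : Finset.univ.filter (fun i : Fin r => (i : ℕ) < k)
      = Finset.univ.map (Fin.castLEEmb hkr) := by
    ext i
    simp only [Finset.mem_filter, Finset.mem_univ, true_and, Finset.mem_map, Fin.castLEEmb_apply]
    exact ⟨fun hi => ⟨⟨i, hi⟩, rfl⟩, by rintro ⟨j, rfl⟩; exact j.2⟩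
  rw [← Finset.sum_filter, this, Finset.sum_map]
  rfl

section Frobenius

theorem trace_transpose_mul_eq_sum_dotProduct {ι κ : Type*} [Fintype ι] [Fintype κ]
    (P Q : Matrix ι κ ℝ) : trace (Pᵀ * Q) = ∑ i, P i ⬝ᵥ Q i := by
  simp only [trace, diag, mul_apply, transpose_apply, dotProduct]
  exact Finset.sum_comm

variable {m n k : ℕ}

theorem frobSq_eq_sum_dotProduct (M : Matrix (Fin m) (Fin n) ℝ) :
    frobSq M = ∑ i, M i ⬝ᵥ M i := by
  simp only [frobSq, dotProduct, sq]

theorem frobSq_eq_trace (M : Matrix (Fin m) (Fin n) ℝ) : frobSq M = trace (Mᵀ * M) := by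
  rw [trace_transpose_mul_eq_sum_dotProduct, frobSq_eq_sum_dotProduct]

theorem frobSq_transpose (M : Matrix (Fin m) (Fin n) ℝ) : frobSq Mᵀ = frobSq M :=
  Finset.sum_comm

theorem frobSq_of_smul {w : Fin k → Fin n → ℝ} (hw : ∀ j, w j ⬝ᵥ w j = 1) (c : Fin k → ℝ) :
    frobSq (of fun j => c j • w j) = ∑ j, c j ^ 2 := by
  rw [frobSq_eq_sum_dotProduct]
  refine Finset.sum_congr rfl fun j _ => ?_
  change (c j • w j) ⬝ᵥ (c j • w j) = _
  rw [smul_dotProduct, dotProduct_smul, hw, smul_eq_mul, smul_eq_mul, mul_one, sq]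

theorem frobSq_sum_smul_vecMulVec {r : ℕ} {u : Fin r → Fin m → ℝ} {v : Fin r → Fin n → ℝ}
    (hu : ∀ i j, u i ⬝ᵥ u j = if i = j then 1 else 0)
    (hv : ∀ i j, v i ⬝ᵥ v j = if i = j then 1 else 0) (c : Fin r → ℝ) :
    frobSq (∑ i, c i • vecMulVec (u i) (v i)) = ∑ i, c i ^ 2 := by
  have hrow : ∀ a, (∑ i, c i • vecMulVec (u i) (v i)) a = ∑ i, (c i * u i a) • v i := fun a => by
    ext b
    simp [Matrix.sum_apply, vecMulVec_apply, mul_assoc]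
  simp only [frobSq_eq_sum_dotProduct, hrow, sum_smul_dotProduct_sum_smul hv, mul_one]
  rw [Finset.sum_comm]
  refine Finset.sum_congr rfl fun i _ => ?_
  calc ∑ a, c i * u i a * (c i * u i a) = c i ^ 2 * (u i ⬝ᵥ u i) := by
        rw [dotProduct, Finset.mul_sum]
        exact Finset.sum_congr rfl fun a _ => by ring
    _ = c i ^ 2 := by simp [hu]

theorem frobSq_mul_of_mul_transpose_eq_one {W : Matrix (Fin k) (Fin k) ℝ} (hW : W * Wᵀ = 1)
    (X : Matrix (Fin m) (Fin k) ℝ) : frobSq (X * W) = frobSq X := by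
  rw [frobSq_eq_trace, frobSq_eq_trace, transpose_mul, Matrix.mul_assoc, trace_mul_comm,
    Matrix.mul_assoc, Matrix.mul_assoc X, hW, Matrix.mul_one]

theorem frobSq_transpose_mul_of_mul_transpose_eq_one {W : Matrix (Fin k) (Fin k) ℝ}
    (hW : W * Wᵀ = 1) (Y : Matrix (Fin k) (Fin n) ℝ) : frobSq (Wᵀ * Y) = frobSq Y := by
  rw [frobSq_eq_trace, frobSq_eq_trace, transpose_mul, transpose_transpose, Matrix.mul_assoc,
    ← Matrix.mul_assoc W, hW, Matrix.one_mul]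

end Frobenius

theorem exists_mul_transpose_eq_one_and_gram_eq_diagonal {ι κ : Type*} [Fintype ι]
    [Fintype κ] [DecidableEq κ] (X : Matrix ι κ ℝ) :
    ∃ (W : Matrix κ κ ℝ) (d : κ → ℝ), W * Wᵀ = 1 ∧ (X * W)ᵀ * (X * W) = diagonal d := by
  have hH : (Xᵀ * X).IsHermitian := by
    simpa [conjTranspose_eq_transpose_of_trivial] using isHermitian_conjTranspose_mul_self X
  refine ⟨hH.eigenvectorUnitary, hH.eigenvalues, ?_, ?_⟩
  · simpa [star_eq_conjTranspose, conjTranspose_eq_transpose_of_trivial] using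
      Unitary.coe_mul_star_self hH.eigenvectorUnitary
  · have := hH.conjStarAlgAut_star_eigenvectorUnitary
    simp only [Unitary.conjStarAlgAut_apply, Unitary.coe_star, star_eq_conjTranspose,
      conjTranspose_eq_transpose_of_trivial, transpose_transpose, RCLike.ofReal_real_eq_id,
      CompTriple.comp_eq] at this
    rw [transpose_mul, ← this]
    simp [Matrix.mul_assoc]

section Loss

variable {m n k : ℕ}

noncomputable def qpcaLoss (A : Matrix (Fin m) (Fin n) ℝ) (γ : ℝ)
    (X : Matrix (Fin m) (Fin k) ℝ) (Y : Matrix (Fin k) (Fin n) ℝ) : ℝ :=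
  frobSq (A - X * Y) + γ * frobSq X + γ * frobSq Y

theorem qpcaLoss_mul_transpose_mul {W : Matrix (Fin k) (Fin k) ℝ} (hW : W * Wᵀ = 1)
    (A : Matrix (Fin m) (Fin n) ℝ) (γ : ℝ) (X : Matrix (Fin m) (Fin k) ℝ)
    (Y : Matrix (Fin k) (Fin n) ℝ) : qpcaLoss A γ (X * W) (Wᵀ * Y) = qpcaLoss A γ X Y := by
  rw [qpcaLoss, qpcaLoss, Matrix.mul_assoc, ← Matrix.mul_assoc W, hW, Matrix.one_mul,
    frobSq_mul_of_mul_transpose_eq_one hW, frobSq_transpose_mul_of_mul_transpose_eq_one hW]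

theorem qpcaLoss_eq_of_gram_eq_diagonal (A : Matrix (Fin m) (Fin n) ℝ) (γ : ℝ)
    {X : Matrix (Fin m) (Fin k) ℝ} {d : Fin k → ℝ} (hX : Xᵀ * X = diagonal d)
    (Y : Matrix (Fin k) (Fin n) ℝ) :
    qpcaLoss A γ X Y = frobSq A +
      ∑ j, ((d j + γ) * (Y j ⬝ᵥ Y j) - 2 * ((Xᵀ j ᵥ* A) ⬝ᵥ Y j) + γ * d j) := by
  have hcross : trace ((X * Y)ᵀ * A) = ∑ j, (Xᵀ j ᵥ* A) ⬝ᵥ Y j := by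
    rw [transpose_mul, Matrix.mul_assoc, trace_transpose_mul_eq_sum_dotProduct]
    simp only [dotProduct_comm (Y _)]
    rfl
  have hquad : trace ((X * Y)ᵀ * (X * Y)) = ∑ j, d j * (Y j ⬝ᵥ Y j) := by
    rw [transpose_mul, Matrix.mul_assoc, ← Matrix.mul_assoc Xᵀ, hX,
      trace_transpose_mul_eq_sum_dotProduct]
    congr! 1 with j
    rw [show (diagonal d * Y) j = d j • Y j from funext (diagonal_mul d Y j), dotProduct_smul,
      smul_eq_mul]
  have hX' : frobSq X = ∑ j, d j := by rw [frobSq_eq_trace, hX, trace_diagonal]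
  rw [qpcaLoss, frobSq_eq_trace (A - X * Y), transpose_sub, Matrix.sub_mul, Matrix.mul_sub,
    Matrix.mul_sub, trace_sub, trace_sub, trace_sub, ← frobSq_eq_trace,
    ← trace_transpose (Aᵀ * _), transpose_mul, transpose_transpose, hcross, hquad, hX',
    frobSq_eq_sum_dotProduct Y]
  simp only [add_mul, Finset.sum_add_distrib, Finset.sum_sub_distrib, ← Finset.mul_sum]
  ring

end Loss

theorem vecMul_sum_smul_vecMulVec {ι M N : Type*} [Fintype ι] [Fintype M] (σ : ι → ℝ)
    (u : ι → M → ℝ) (v : ι → N → ℝ) (x : M → ℝ) :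
    x ᵥ* (∑ i, σ i • vecMulVec (u i) (v i)) = ∑ i, (σ i * (x ⬝ᵥ u i)) • v i := by
  simp [vecMul_sum, vecMul_smul, vecMul_vecMulVec, smul_smul]

theorem dotProduct_self_vecMul_sum_smul_vecMulVec {ι M N : Type*} [Fintype ι] [Fintype M]
    [Fintype N] [DecidableEq ι] (σ : ι → ℝ) (u : ι → M → ℝ) {v : ι → N → ℝ}
    (hv : ∀ i j, v i ⬝ᵥ v j = if i = j then 1 else 0) (x : M → ℝ) :
    (x ᵥ* ∑ i, σ i • vecMulVec (u i) (v i)) ⬝ᵥ (x ᵥ* ∑ i, σ i • vecMulVec (u i) (v i))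
      = ∑ i, σ i ^ 2 * (x ⬝ᵥ u i) ^ 2 := by
  rw [vecMul_sum_smul_vecMulVec, sum_smul_dotProduct_sum_smul hv]
  exact Finset.sum_congr rfl fun i _ => by ring

-- The term of `qpcaLoss_eq_of_gram_eq_diagonal` for a column `z` of `X` and the row `y` of `Y`.
theorem neg_sum_le_column_term {ι M N : Type*} [Fintype ι] [Fintype M] [Fintype N]
    [DecidableEq ι] {σ : ι → ℝ} {u : ι → M → ℝ} {v : ι → N → ℝ} {γ : ℝ} (hγ : 0 ≤ γ)
    (hσ : ∀ i, 0 ≤ σ i) (hu : ∀ i j, u i ⬝ᵥ u j = if i = j then 1 else 0)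
    (hv : ∀ i j, v i ⬝ᵥ v j = if i = j then 1 else 0) (z : M → ℝ) (y : N → ℝ) :
    -∑ i, (z ⬝ᵥ u i) ^ 2 / (z ⬝ᵥ z) * max (σ i - γ) 0 ^ 2 ≤
      (z ⬝ᵥ z + γ) * (y ⬝ᵥ y) - 2 * ((z ᵥ* ∑ i, σ i • vecMulVec (u i) (v i)) ⬝ᵥ y)
        + γ * (z ⬝ᵥ z) := by
  set d := z ⬝ᵥ z
  have hd : 0 ≤ d := by simpa using dotProduct_self_star_nonneg z
  have hbessel : ∑ i, (z ⬝ᵥ u i) ^ 2 ≤ d := by simpa using sum_sq_dotProduct_div_le hu z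
  have hsquare := neg_dotProduct_self_div_le (add_nonneg hd hγ)
    (b := z ᵥ* ∑ i, σ i • vecMulVec (u i) (v i))
    (fun h => by rw [dotProduct_self_eq_zero.mp (show d = 0 by linarith), zero_vecMul]) y
  have hterm : ∀ i, σ i ^ 2 * (z ⬝ᵥ u i) ^ 2 / (d + γ)
      ≤ (z ⬝ᵥ u i) ^ 2 / d * max (σ i - γ) 0 ^ 2 + γ * (z ⬝ᵥ u i) ^ 2 := fun i =>
    sq_mul_div_add_le (hσ i) hγ (sq_nonneg _)
      ((Finset.single_le_sum (fun j _ => sq_nonneg (z ⬝ᵥ u j)) (Finset.mem_univ i)).trans hbessel)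
  have hsum := Finset.sum_le_sum fun i (_ : i ∈ Finset.univ) => hterm i
  rw [← Finset.sum_div, ← dotProduct_self_vecMul_sum_smul_vecMulVec σ u hv,
    Finset.sum_add_distrib, ← Finset.mul_sum] at hsum
  have := mul_le_mul_of_nonneg_left hbessel hγ
  linarith

section LowerBound

variable {m n k r : ℕ} {σ : Fin r → ℝ} {u : Fin r → Fin m → ℝ} {v : Fin r → Fin n → ℝ}

theorem qpcaLoss_ge_of_gram_eq_diagonal {γ : ℝ} (hγ : 0 ≤ γ) (hσ0 : ∀ i, 0 ≤ σ i)
    (hσ : Antitone σ) (hu : ∀ i j, u i ⬝ᵥ u j = if i = j then 1 else 0)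
    (hv : ∀ i j, v i ⬝ᵥ v j = if i = j then 1 else 0) {X : Matrix (Fin m) (Fin k) ℝ}
    {d : Fin k → ℝ} (hX : Xᵀ * X = diagonal d) (Y : Matrix (Fin k) (Fin n) ℝ) :
    ∑ i, σ i ^ 2 - ∑ i : Fin r, (if (i : ℕ) < k then max (σ i - γ) 0 ^ 2 else 0)
      ≤ qpcaLoss (∑ i, σ i • vecMulVec (u i) (v i)) γ X Y := by
  set h : Fin r → ℝ := fun i => max (σ i - γ) 0 ^ 2
  set c : Fin r → ℝ := fun i => ∑ j, (Xᵀ j ⬝ᵥ u i) ^ 2 / d j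
  have hgram : ∀ j l, Xᵀ j ⬝ᵥ Xᵀ l = if j = l then d j else 0 := fun j l => by
    rw [← diagonal_apply, ← hX]
    rfl
  have hd : ∀ j, d j = Xᵀ j ⬝ᵥ Xᵀ j := fun j => by simpa using (hgram j j).symm
  have hcolumns : ∑ i, σ i ^ 2 - ∑ i, c i * h i
      ≤ qpcaLoss (∑ i, σ i • vecMulVec (u i) (v i)) γ X Y := by
    have := Finset.sum_le_sum fun j (_ : j ∈ Finset.univ) =>
      neg_sum_le_column_term hγ hσ0 hu hv (Xᵀ j) (Y j)
    simp only [← hd, Finset.sum_neg_distrib] at this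
    rw [qpcaLoss_eq_of_gram_eq_diagonal _ _ hX, frobSq_sum_smul_vecMulVec hu hv]
    simp only [c, Finset.sum_mul]
    rw [Finset.sum_comm]
    linarith
  have hc1 : ∀ i, c i ≤ 1 := fun i => by
    simpa [c, dotProduct_comm, hu i i] using sum_sq_dotProduct_div_le hgram (u i)
  have hck : ∑ i, c i ≤ k := by
    simp only [c]
    rw [Finset.sum_comm]
    refine (Finset.sum_le_sum fun j _ => (?_ : _ ≤ (1 : ℝ))).trans (by simp)
    rw [← Finset.sum_div]
    refine div_le_one_of_le₀ ?_ (by rw [hd]; exact dotProduct_self_star_nonneg _)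
    rw [hd]
    simpa using sum_sq_dotProduct_div_le hu (Xᵀ j)
  have htop := sum_mul_le_sum_of_antitone (h := h) (c := c)
    (fun i j hij => pow_le_pow_left₀ (le_max_right _ _)
      (max_le_max (sub_le_sub_right (hσ hij) γ) le_rfl) 2)
    (fun i => sq_nonneg _)
    (fun i => Finset.sum_nonneg fun j _ => div_nonneg (sq_nonneg _)
      (by rw [hd]; exact dotProduct_self_star_nonneg _))
    hc1 hck
  linarith

theorem qpcaLoss_ge {γ : ℝ} (hγ : 0 ≤ γ) (hσ0 : ∀ i, 0 ≤ σ i) (hσ : Antitone σ)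
    (hu : ∀ i j, u i ⬝ᵥ u j = if i = j then 1 else 0)
    (hv : ∀ i j, v i ⬝ᵥ v j = if i = j then 1 else 0) (X : Matrix (Fin m) (Fin k) ℝ)
    (Y : Matrix (Fin k) (Fin n) ℝ) :
    ∑ i, σ i ^ 2 - ∑ i : Fin r, (if (i : ℕ) < k then max (σ i - γ) 0 ^ 2 else 0)
      ≤ qpcaLoss (∑ i, σ i • vecMulVec (u i) (v i)) γ X Y := by
  obtain ⟨W, d, hW, hXW⟩ := exists_mul_transpose_eq_one_and_gram_eq_diagonal X
  rw [← qpcaLoss_mul_transpose_mul hW]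
  exact qpcaLoss_ge_of_gram_eq_diagonal hγ hσ0 hσ hu hv hXW _

end LowerBound

theorem exists_qpcaLoss_eq {m n k r : ℕ} (hkr : k ≤ r) {u : Fin r → Fin m → ℝ}
    {v : Fin r → Fin n → ℝ} (hu : ∀ i j, u i ⬝ᵥ u j = if i = j then 1 else 0)
    (hv : ∀ i j, v i ⬝ᵥ v j = if i = j then 1 else 0) (σ : Fin r → ℝ) (γ : ℝ)
    {s : Fin r → ℝ} (hs : ∀ i : Fin r, (i : ℕ) < k → 0 ≤ s i) :
    ∃ (X : Matrix (Fin m) (Fin k) ℝ) (Y : Matrix (Fin k) (Fin n) ℝ),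
      qpcaLoss (∑ i, σ i • vecMulVec (u i) (v i)) γ X Y
        = ∑ i : Fin r, if (i : ℕ) < k then (σ i - s i) ^ 2 + 2 * γ * s i else σ i ^ 2 := by
  set e : Fin k → Fin r := Fin.castLE hkr
  set t : Fin r → ℝ := fun i => if (i : ℕ) < k then s i else 0
  have hsum_t : ∑ j, √(s (e j)) ^ 2 = ∑ i, t i := by
    rw [sum_ite_lt_eq_sum_castLE hkr]
    exact Finset.sum_congr rfl fun j _ => Real.sq_sqrt (hs _ j.2)
  refine ⟨(of fun j => √(s (e j)) • u (e j))ᵀ, of fun j => √(s (e j)) • v (e j), ?_⟩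
  have hXY : (of fun j => √(s (e j)) • u (e j))ᵀ * (of fun j => √(s (e j)) • v (e j))
      = ∑ i, t i • vecMulVec (u i) (v i) := by
    ext a b
    simp only [mul_apply, transpose_apply, of_apply, Pi.smul_apply, Matrix.sum_apply,
      Matrix.smul_apply, vecMulVec_apply, smul_eq_mul, t, ite_mul, zero_mul]
    rw [sum_ite_lt_eq_sum_castLE hkr]
    refine Finset.sum_congr rfl fun j _ => ?_
    linear_combination u (e j) a * v (e j) b * Real.mul_self_sqrt (hs (e j) j.2)
  rw [qpcaLoss, hXY, ← Finset.sum_sub_distrib]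
  simp_rw [← sub_smul]
  rw [frobSq_sum_smul_vecMulVec hu hv, frobSq_transpose,
    frobSq_of_smul (fun j => by simpa using hu (e j) (e j)),
    frobSq_of_smul (fun j => by simpa using hv (e j) (e j)), hsum_t, Finset.mul_sum,
    ← Finset.sum_add_distrib, ← Finset.sum_add_distrib]
  refine Finset.sum_congr rfl fun i _ => ?_
  simp only [t]
  split_ifs <;> ring

theorem qpca_min_value_general {m n r k : ℕ} (hkr : k ≤ r) (γ : ℝ) (hγ : 0 ≤ γ)
    (σ : Fin r → ℝ) (hpos : ∀ i, 0 < σ i)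
    (hmono : ∀ i j : Fin r, i ≤ j → σ j ≤ σ i)
    (hγk : ∀ i : Fin r, (i : ℕ) < k → γ < σ i)
    (u : Fin r → Fin m → ℝ) (v : Fin r → Fin n → ℝ)
    (hu : ∀ i j, (∑ t, u i t * u j t) = if i = j then (1 : ℝ) else 0)
    (hv : ∀ i j, (∑ t, v i t * v j t) = if i = j then (1 : ℝ) else 0)
    (A : Matrix (Fin m) (Fin n) ℝ)
    (hA : A = ∑ i, σ i • Matrix.vecMulVec (u i) (v i)) :
    IsLeast {c : ℝ | ∃ (X : Matrix (Fin m) (Fin k) ℝ) (Y : Matrix (Fin k) (Fin n) ℝ),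
        c = frobSq (A - X * Y) + γ * frobSq X + γ * frobSq Y}
      (∑ i : Fin r, if (i : ℕ) < k then 2 * γ * σ i - γ ^ 2 else σ i ^ 2) := by
  subst hA
  constructor
  · obtain ⟨X, Y, hXY⟩ := exists_qpcaLoss_eq hkr hu hv σ γ (s := fun i => σ i - γ)
      fun i hi => sub_nonneg.mpr (hγk i hi).le
    refine ⟨X, Y, (hXY.trans (Finset.sum_congr rfl fun i _ => ?_)).symm⟩
    split_ifs <;> ring
  · rintro c ⟨X, Y, rfl⟩
    have htarget : (∑ i : Fin r, if (i : ℕ) < k then 2 * γ * σ i - γ ^ 2 else σ i ^ 2)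
        = ∑ i, σ i ^ 2 - ∑ i : Fin r, (if (i : ℕ) < k then max (σ i - γ) 0 ^ 2 else 0) := by
      rw [← Finset.sum_sub_distrib]
      refine Finset.sum_congr rfl fun i _ => ?_
      split_ifs with hi
      · rw [max_eq_left (sub_nonneg.mpr (hγk i hi).le)]
        ring
      · ring
    rw [htarget]
    exact qpcaLoss_ge hγ (fun i => (hpos i).le) hmono hu hv X Y

/-- The minimum value of quadratically regularized PCA: if `A` has singular
values `σ₁ ≥ ⋯ ≥ σ_r > 0`, with a gap between the top `k` and the rest, and
`γ < σᵢ` for `i ≤ k`, then the minimum of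
`‖A − XY‖_F² + γ‖X‖_F² + γ‖Y‖_F²` equals
`∑_{i>k} σᵢ² + ∑_{i≤k} (2γσᵢ − γ²)`, and it is attained. -/
theorem qpca_min_value {m n r k : ℕ} (hkr : k ≤ r) (γ : ℝ) (hγ : 0 ≤ γ)
    (σ : Fin r → ℝ) (hpos : ∀ i, 0 < σ i)
    (hmono : ∀ i j : Fin r, i ≤ j → σ j ≤ σ i)
    (hgap : ∀ i j : Fin r, (i : ℕ) < k → k ≤ (j : ℕ) → σ j < σ i)
    (hγk : ∀ i : Fin r, (i : ℕ) < k → γ < σ i)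
    (u : Fin r → Fin m → ℝ) (v : Fin r → Fin n → ℝ)
    (hu : ∀ i j, (∑ t, u i t * u j t) = if i = j then (1 : ℝ) else 0)
    (hv : ∀ i j, (∑ t, v i t * v j t) = if i = j then (1 : ℝ) else 0)
    (A : Matrix (Fin m) (Fin n) ℝ)
    (hA : A = ∑ i, σ i • Matrix.vecMulVec (u i) (v i)) :
    IsLeast {c : ℝ | ∃ (X : Matrix (Fin m) (Fin k) ℝ) (Y : Matrix (Fin k) (Fin n) ℝ),
        c = frobSq (A - X * Y) + γ * frobSq X + γ * frobSq Y}
      (∑ i : Fin r, if (i : ℕ) < k then 2 * γ * σ i - γ ^ 2 else σ i ^ 2) :=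
  qpca_min_value_general hkr γ hγ σ hpos hmono hγk u v hu hv A hA
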